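/- Let p : ℝ^d → ℝ^m be a polynomial map given by polynomials p₁,…,p_m and let X : [0,L] → ℝ^d be a piecewise continuously differentiable path such that p_i(X(t)) = 0 for all i = 1,…,m and all t ∈ [0,L] (i.e. X lies in the zero set of the ideal I_p = ⟨p₁,…,p_m⟩). Define p̃(y) = p(y + X(0)) − p(X(0)). Then M_{p̃}^*(σ(X)) = e; that is, ⟨σ(X), M_{p̃}(w)⟩ = 0 for every non-empty word w in the alphabet {1,…,m}, and ⟨σ(X), M_{p̃}(e)⟩ = 1. -/

import Mathlib

/-!
Write `S_w(t)` for the coefficient of the word `w` in the signature of `X` on `[0, t]`. Each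
coordinate of a piecewise `C¹` path is absolutely continuous, so integration by parts for
primitives gives the shuffle identity `S_{u ⧢ v} = S_u S_v`, and the fundamental theorem of
calculus gives `S_i(t) = X^i_t - X^i_0`; together, `⟨σ(X|_{[0,t]}), φ_d(f)⟩ = f(X_t - X_0)`.
Hence for a non-empty word `w ∘ i`,
`⟨σ(X), M_{p̃}(w ∘ i)⟩ = ∫₀ᴸ ⟨σ(X|_{[0,r]}), M_{p̃}(w)⟩ · Σ_j ∂_j p̃_i(X_r - X_0) Ẋ^j_r dr`,
and the sum is the derivative of `r ↦ p̃_i(X_r - X_0) = p_i(X_r) - p_i(X_0) = 0`, so the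
integrand vanishes wherever `X` is differentiable, i.e. almost everywhere.
-/

noncomputable section

open MeasureTheory

/-- Words in the alphabet `{1,…,d}`. -/
abbrev Word (d : ℕ) := List (Fin d)

/-- `T(ℝ^d)`: the real vector space with basis the words in `{1,…,d}`. -/
abbrev Tens (d : ℕ) := Word d →₀ ℝ

namespace SigPaper

variable {d m s : ℕ}

/-- The basis word `w` as an element of `T(ℝ^d)`. -/
def wordT (w : Word d) : Tens d := Finsupp.single w 1

/-- The shuffle product of two words. -/
def shuffleWord : Word d → Word d → Tens d
  | [], v => Finsupp.single v 1
  | u, [] => Finsupp.single u 1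
  | a :: u, b :: v =>
      Finsupp.mapDomain (fun w => a :: w) (shuffleWord u (b :: v)) +
      Finsupp.mapDomain (fun w => b :: w) (shuffleWord (a :: u) v)
  termination_by u v => u.length + v.length
  decreasing_by all_goals simp +arith +decide

/-- The shuffle product `⧢` on `T(ℝ^d)`, the bilinear extension of the shuffle of words. -/
def shuffle (x y : Tens d) : Tens d :=
  x.sum fun u a => y.sum fun v b => (a * b) • shuffleWord u v

/-- The operator appending the letter `i` at the end of every word (`T_i^+`). -/
def appendLetter (i : Fin d) (x : Tens d) : Tens d :=
  Finsupp.mapDomain (fun w => w ++ [i]) x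

/-- The right half-shuffle of two words: `w ≻ (v∘i) = (w ⧢ v)∘i` (zero if the right word
is empty). -/
def halfShuffleWord (u v : Word d) : Tens d :=
  match v.getLast? with
  | none => 0
  | some i => appendLetter i (shuffleWord u v.dropLast)

/-- The right half-shuffle `≻`, extended bilinearly. -/
def halfShuffle (x y : Tens d) : Tens d :=
  x.sum fun u a => y.sum fun v b => (a * b) • halfShuffleWord u v

/-- The letter-appending operator `T_i^+`. -/
def Tplus (i : Fin d) : Tens d → Tens d := appendLetter i

/-- `T_i^-` on a word: removes the last letter if it equals `i`, otherwise `0`. -/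
def TminusWord (i : Fin d) (w : Word d) : Tens d :=
  match w.getLast? with
  | none => 0
  | some j => if j = i then Finsupp.single w.dropLast 1 else 0

/-- The letter-removing operator `T_i^-`. -/
def Tminus (i : Fin d) (x : Tens d) : Tens d := x.sum fun w a => a • TminusWord i w

/-- The single-letter word `i` in `T(ℝ^d)`. -/
def letterT (i : Fin d) : Tens d := Finsupp.single [i] 1

/-- Shuffle powers `x^{⧢ n}`. -/
def shufflePow (x : Tens d) : ℕ → Tens d
  | 0 => Finsupp.single [] 1
  | n + 1 => shuffle (shufflePow x n) x

/-- Shuffle product of a list of elements. -/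
def shuffleList : List (Tens d) → Tens d
  | [] => Finsupp.single [] 1
  | x :: xs => shuffle x (shuffleList xs)

/-- Image of the monomial `x^t` under `φ_d`: the shuffle product of its letters. -/
def phiMon (t : Fin d →₀ ℕ) : Tens d :=
  shuffleList ((List.finRange d).map fun i => shufflePow (letterT i) (t i))

/-- The embedding `φ_d : ℝ[x₁,…,x_d] → (T(ℝ^d), ⧢)` sending the monomial
`x_{i₁}⋯x_{i_l}` to `i₁ ⧢ ⋯ ⧢ i_l`. -/
def phi (f : MvPolynomial (Fin d) ℝ) : Tens d :=
  f.support.sum fun t => f.coeff t • phiMon t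

/-- A polynomial map `p : ℝ^d → ℝ^m`, given by `m` polynomials in `d` variables. -/
abbrev PolyMap (d m : ℕ) := Fin m → MvPolynomial (Fin d) ℝ

/-- `k_p^{ij} = φ_d(∂p_i/∂x_j) ∈ T(ℝ^d)`. -/
def kP (p : PolyMap d m) (i : Fin m) (j : Fin d) : Tens d :=
  phi (MvPolynomial.pderiv j (p i))

/-- Auxiliary: `M_p` on reversed words, so that `M_p(e) = e` and
`M_p(w∘i) = Σ_j (M_p(w) ⧢ k_p^{ij})∘j`. -/
def MpRev (p : PolyMap d m) : List (Fin m) → Tens d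
  | [] => Finsupp.single [] 1
  | i :: w => ∑ j : Fin d, appendLetter j (shuffle (MpRev p w) (kP p i j))

/-- `M_p` on a word. -/
def MpWord (p : PolyMap d m) (w : Word m) : Tens d := MpRev p w.reverse

/-- The linear map `M_p : T(ℝ^m) → T(ℝ^d)`. -/
def Mp (p : PolyMap d m) (x : Tens m) : Tens d := x.sum fun w a => a • MpWord p w

/-- `X : [0,L] → ℝ^d` is piecewise continuously differentiable: there is a partition
`0 = t₀ ≤ t₁ ≤ ⋯ ≤ t_n = L` such that `X` is `C¹` on each subinterval. -/
def PiecewiseC1 (X : ℝ → Fin d → ℝ) (L : ℝ) : Prop :=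
  ∃ (n : ℕ) (t : Fin (n + 1) → ℝ), Monotone t ∧ t 0 = 0 ∧ t (Fin.last n) = L ∧
    ∀ k : Fin n, ContDiffOn ℝ 1 X (Set.Icc (t k.castSucc) (t k.succ))

/-- Iterated-integral signature coefficients, on reversed words:
`⟨σ(X|_{[0,t]}), w∘i⟩ = ∫_0^t ⟨σ(X|_{[0,r]}), w⟩ Ẋ^i_r dr`. -/
def sigRev (X : ℝ → Fin d → ℝ) : List (Fin d) → ℝ → ℝ
  | [], _ => 1
  | i :: w, t => ∫ r in (0:ℝ)..t, sigRev X w r * deriv (fun u => X u i) r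

/-- `⟨σ(X|_{[0,L]}), w⟩`, the signature coefficient of the word `w`. -/
def sigWord (X : ℝ → Fin d → ℝ) (L : ℝ) (w : Word d) : ℝ := sigRev X w.reverse L

/-- The pairing `⟨σ(X|_{[0,L]}), x⟩` for `x ∈ T(ℝ^d)`. -/
def sigT (X : ℝ → Fin d → ℝ) (L : ℝ) (x : Tens d) : ℝ :=
  x.sum fun w a => a * sigWord X L w

/-- The transformed path `p(X) : t ↦ p(X(t))`. -/
def pPath (p : PolyMap d m) (X : ℝ → Fin d → ℝ) : ℝ → Fin m → ℝ :=
  fun t i => MvPolynomial.eval (X t) (p i)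

/-- The translated polynomial map `p̃(y) = p(y + x₀) − p(x₀)`, satisfying `p̃(0) = 0`. -/
def ptilde (p : PolyMap d m) (x0 : Fin d → ℝ) : PolyMap d m := fun i =>
  MvPolynomial.aeval (fun j => MvPolynomial.X j + MvPolynomial.C (x0 j)) (p i) -
    MvPolynomial.C (MvPolynomial.eval x0 (p i))

/-- The pairing `⟨exp_∘(L·𝟙), x⟩` for `x ∈ T(ℝ¹)`: the coefficient of the word of
length `n` in `exp_∘(L·𝟙)` is `Lⁿ/n!`. -/
def expPair (L : ℝ) (x : Tens 1) : ℝ :=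
  x.sum fun w a => a * (L ^ w.length / (w.length.factorial : ℝ))

/-- The pairing `⟨σ(X) ∘ σ(Y), x⟩` of the concatenation product of two signatures with
`x ∈ T(ℝ^d)`: on a word `w` it is `Σ_{u∘v = w} ⟨σ(X), u⟩·⟨σ(Y), v⟩`. -/
def concatPair (X Y : ℝ → Fin d → ℝ) (L : ℝ) (x : Tens d) : ℝ :=
  x.sum fun w a =>
    a * ∑ k ∈ Finset.range (w.length + 1), sigWord X L (w.take k) * sigWord Y L (w.drop k)

end SigPaper

open Set intervalIntegral

theorem AbsolutelyContinuousOnInterval.congr {E : Type*} [PseudoMetricSpace E] {f g : ℝ → E}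
    {a b : ℝ} (hf : AbsolutelyContinuousOnInterval f a b) (hfg : EqOn f g (uIcc a b)) :
    AbsolutelyContinuousOnInterval g a b := by
  rw [absolutelyContinuousOnInterval_iff] at hf ⊢
  intro ε hε
  obtain ⟨δ, hδ, hf⟩ := hf ε hε
  refine ⟨δ, hδ, fun E hE hδE => ?_⟩
  convert hf E hE hδE using 2 with i hi
  rw [hfg (hE.1 i hi).1, hfg (hE.1 i hi).2]

theorem AbsolutelyContinuousOnInterval.trans {f : ℝ → ℝ} {a b c : ℝ}
    (hab : AbsolutelyContinuousOnInterval f a b) (hbc : AbsolutelyContinuousOnInterval f b c)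
    (h₁ : a ≤ b) (h₂ : b ≤ c) : AbsolutelyContinuousOnInterval f a c := by
  -- on `[a, c]`, `f = f a + ∫_a^· f'` by the fundamental theorem of calculus on each piece
  have hint := hab.intervalIntegrable_deriv.trans hbc.intervalIntegrable_deriv
  have hprim := (contDiffOn_const (c := f a)).absolutelyContinuousOnInterval.fun_add
    (hint.absolutelyContinuousOnInterval_intervalIntegral left_mem_uIcc)
  refine hprim.congr fun x hx => ?_
  rw [uIcc_of_le (h₁.trans h₂)] at hx
  dsimp only
  rcases le_total x b with hxb | hbx
  · rw [(hab.mono (uIcc_subset_uIcc_left ?_)).integral_deriv_eq_sub]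
    · ring
    · rw [uIcc_of_le h₁]; exact ⟨hx.1, hxb⟩
  · rw [← integral_add_adjacent_intervals hab.intervalIntegrable_deriv
      (hbc.mono (uIcc_subset_uIcc_left ?_)).intervalIntegrable_deriv,
      hab.integral_deriv_eq_sub, (hbc.mono (uIcc_subset_uIcc_left ?_)).integral_deriv_eq_sub]
    · ring
    all_goals rw [uIcc_of_le h₂]; exact ⟨hbx, hx.2⟩

theorem IntervalIntegrable.integral_mul_integral {f g : ℝ → ℝ} {a b : ℝ}
    (hf : IntervalIntegrable f volume a b) (hg : IntervalIntegrable g volume a b) :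
    (∫ x in a..b, f x) * (∫ x in a..b, g x) =
      ∫ x in a..b, (f x * ∫ y in a..x, g y) + (∫ y in a..x, f y) * g x := by
  have hF := hf.absolutelyContinuousOnInterval_intervalIntegral left_mem_uIcc
  have hG := hg.absolutelyContinuousOnInterval_intervalIntegral left_mem_uIcc
  have := hF.integral_deriv_mul_eq_sub hG
  rw [integral_same, zero_mul, sub_zero] at this
  rw [← this]
  refine integral_congr_ae ?_
  filter_upwards [hf.ae_hasDerivAt_integral, hg.ae_hasDerivAt_integral] with x hfx hgx hx
  rw [(hfx (uIoc_subset_uIcc hx) a left_mem_uIcc).deriv,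
    (hgx (uIoc_subset_uIcc hx) a left_mem_uIcc).deriv]

namespace MvPolynomial

variable {σ 𝕜 : Type*} [Fintype σ] [NontriviallyNormedField 𝕜]

theorem hasDerivAt_eval (q : MvPolynomial σ 𝕜) {Y : 𝕜 → σ → 𝕜} {Y' : σ → 𝕜} {r : 𝕜}
    (hY : ∀ j, HasDerivAt (fun u => Y u j) (Y' j) r) :
    HasDerivAt (fun u => eval (Y u) q) (∑ j, eval (Y r) (pderiv j q) * Y' j) r := by
  classical
  induction q using MvPolynomial.induction_on with
  | C a => simpa using hasDerivAt_const r a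
  | add p q hp hq => simpa [add_mul, Finset.sum_add_distrib] using hp.fun_add hq
  | mul_X p i hp =>
    simp only [map_mul, eval_X]
    refine (hp.fun_mul (hY i)).congr_deriv ?_
    simp only [Finset.sum_mul, Derivation.leibniz, pderiv_X, Pi.single_apply, smul_eq_mul,
      mul_ite, mul_one, mul_zero, map_add, apply_ite (eval (Y r)), map_zero, map_mul, eval_X,
      add_mul, ite_mul, zero_mul, Finset.sum_add_distrib, Finset.sum_ite_eq, Finset.mem_univ,
      ↓reduceIte]
    rw [add_comm]; congr 1; exact Finset.sum_congr rfl fun j _ => by ring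

theorem sum_eval_pderiv_mul_eq_zero {q : MvPolynomial σ 𝕜} {Y : 𝕜 → σ → 𝕜} {Y' : σ → 𝕜}
    {r : 𝕜} (hY : ∀ j, HasDerivAt (fun u => Y u j) (Y' j) r)
    (hq : ∀ᶠ u in nhds r, eval (Y u) q = 0) :
    ∑ j, eval (Y r) (pderiv j q) * Y' j = 0 :=
  (q.hasDerivAt_eval hY).unique ((hasDerivAt_const r 0).congr_of_eventuallyEq hq)

end MvPolynomial

namespace SigPaper

variable {d : ℕ} {X : ℝ → Fin d → ℝ} {L t : ℝ}

theorem PiecewiseC1.nonneg (hX : PiecewiseC1 X L) : 0 ≤ L := by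
  obtain ⟨n, τ, hτ, h0, hL, -⟩ := hX
  exact h0 ▸ hL ▸ hτ (Fin.zero_le _)

theorem PiecewiseC1.absolutelyContinuousOnInterval (hX : PiecewiseC1 X L) (j : Fin d) :
    AbsolutelyContinuousOnInterval (fun u => X u j) 0 L := by
  obtain ⟨n, τ, hτ, h0, hL, hC1⟩ := hX
  suffices ∀ k, AbsolutelyContinuousOnInterval (fun u => X u j) (τ 0) (τ k) by
    simpa only [h0, hL] using this (Fin.last n)
  intro k
  induction k using Fin.induction with
  | zero =>
    refine (contDiffOn_const (c := X (τ 0) j)).absolutelyContinuousOnInterval.congr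
      fun x hx => ?_
    rw [uIcc_self, mem_singleton_iff] at hx
    rw [hx]
  | succ k ih =>
    have hk : τ k.castSucc ≤ τ k.succ := hτ (Fin.castSucc_le_succ k)
    refine ih.trans ?_ (hτ (Fin.zero_le _)) hk
    exact (contDiffOn_pi.1 (uIcc_of_le hk ▸ hC1 k) j).absolutelyContinuousOnInterval

theorem sigT_eq_linearCombination (x : Tens d) :
    sigT X t x = Finsupp.linearCombination ℝ (sigWord X t) x := by
  simp [sigT, Finsupp.linearCombination_apply, smul_eq_mul]

theorem sigT_single (w : Word d) (a : ℝ) : sigT X t (Finsupp.single w a) = a * sigWord X t w := by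
  simp [sigT_eq_linearCombination]

theorem sigT_add (x y : Tens d) : sigT X t (x + y) = sigT X t x + sigT X t y := by
  simp [sigT_eq_linearCombination]

theorem sigT_smul (c : ℝ) (x : Tens d) : sigT X t (c • x) = c * sigT X t x := by
  simp [sigT_eq_linearCombination]

theorem sigT_sum {ι : Type*} (s : Finset ι) (f : ι → Tens d) :
    sigT X t (∑ i ∈ s, f i) = ∑ i ∈ s, sigT X t (f i) := by
  simp [sigT_eq_linearCombination]

theorem sigWord_nil : sigWord X t [] = 1 := rfl

theorem sigWord_append_singleton (w : Word d) (j : Fin d) :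
    sigWord X t (w ++ [j]) = ∫ r in 0..t, sigWord X r w * deriv (fun u => X u j) r := by
  simp [sigWord, sigRev]

theorem continuousOn_sigRev (hX : ∀ j, IntervalIntegrable (deriv fun u => X u j) volume 0 L)
    (w : List (Fin d)) : ContinuousOn (sigRev X w) (uIcc 0 L) := by
  induction w with
  | nil => exact continuousOn_const
  | cons i w ih => exact continuousOn_primitive_interval' ((hX i).continuousOn_mul ih) left_mem_uIcc

theorem continuousOn_sigT (hX : ∀ j, IntervalIntegrable (deriv fun u => X u j) volume 0 L)
    (x : Tens d) : ContinuousOn (fun t => sigT X t x) (uIcc 0 L) :=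
  continuousOn_finsetSum _ fun w _ => continuousOn_const.mul (continuousOn_sigRev hX w.reverse)

theorem intervalIntegrable_sigWord_mul_deriv
    (hX : ∀ j, IntervalIntegrable (deriv fun u => X u j) volume 0 L) (w : Word d) (j : Fin d)
    (ht : t ∈ uIcc 0 L) :
    IntervalIntegrable (fun r => sigWord X r w * deriv (fun u => X u j) r) volume 0 t :=
  ((hX j).continuousOn_mul (continuousOn_sigRev hX w.reverse)).mono_set
    (uIcc_subset_uIcc_left ht)

theorem intervalIntegrable_sigT_mul_deriv
    (hX : ∀ j, IntervalIntegrable (deriv fun u => X u j) volume 0 L) (x : Tens d) (j : Fin d)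
    (ht : t ∈ uIcc 0 L) :
    IntervalIntegrable (fun r => sigT X r x * deriv (fun u => X u j) r) volume 0 t :=
  ((hX j).continuousOn_mul (continuousOn_sigT hX x)).mono_set (uIcc_subset_uIcc_left ht)

theorem sigT_appendLetter (hX : ∀ j, IntervalIntegrable (deriv fun u => X u j) volume 0 L)
    (j : Fin d) (x : Tens d) (ht : t ∈ uIcc 0 L) :
    sigT X t (appendLetter j x) = ∫ r in 0..t, sigT X r x * deriv (fun u => X u j) r := by
  calc sigT X t (appendLetter j x)
      = ∑ w ∈ x.support, ∫ r in 0..t, x w * (sigWord X r w * deriv (fun u => X u j) r) := by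
        rw [appendLetter, sigT_eq_linearCombination, Finsupp.linearCombination_mapDomain,
          Finsupp.linearCombination_apply, Finsupp.sum]
        simp only [Function.comp_apply, sigWord_append_singleton, smul_eq_mul,
          intervalIntegral.integral_const_mul]
    _ = ∫ r in 0..t, sigT X r x * deriv (fun u => X u j) r := by
        rw [← integral_finsetSum fun w _ =>
          (intervalIntegrable_sigWord_mul_deriv hX w j ht).const_mul _]
        simp only [sigT, Finsupp.sum, Finset.sum_mul, mul_assoc]

theorem shuffleWord_nil_left (v : Word d) : shuffleWord [] v = Finsupp.single v 1 := by
  rw [shuffleWord]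

theorem shuffleWord_nil_right (u : Word d) : shuffleWord u [] = Finsupp.single u 1 := by
  cases u <;> simp [shuffleWord]

theorem shuffleWord_cons_cons (a b : Fin d) (u v : Word d) :
    shuffleWord (a :: u) (b :: v) =
      Finsupp.mapDomain (a :: ·) (shuffleWord u (b :: v)) +
        Finsupp.mapDomain (b :: ·) (shuffleWord (a :: u) v) := by
  rw [shuffleWord]

theorem appendLetter_add (j : Fin d) (x y : Tens d) :
    appendLetter j (x + y) = appendLetter j x + appendLetter j y :=
  Finsupp.mapDomain_add

theorem appendLetter_single (j : Fin d) (w : Word d) (a : ℝ) :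
    appendLetter j (Finsupp.single w a) = Finsupp.single (w ++ [j]) a :=
  Finsupp.mapDomain_single

theorem appendLetter_mapDomain_cons (j c : Fin d) (x : Tens d) :
    appendLetter j (Finsupp.mapDomain (c :: ·) x) =
      Finsupp.mapDomain (c :: ·) (appendLetter j x) := by
  simp only [appendLetter, ← Finsupp.mapDomain_comp]
  rfl

theorem shuffleWord_append_singleton (a b : Fin d) (u v : Word d) :
    shuffleWord (u ++ [a]) (v ++ [b]) =
      appendLetter a (shuffleWord u (v ++ [b])) + appendLetter b (shuffleWord (u ++ [a]) v) := by
  induction u generalizing v with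
  | nil =>
    induction v with
    | nil =>
      simp only [List.nil_append, shuffleWord_cons_cons, shuffleWord_nil_left,
        shuffleWord_nil_right, Finsupp.mapDomain_single, appendLetter_single, List.cons_append]
      abel
    | cons e v ih =>
      simp only [List.nil_append, List.cons_append] at ih ⊢
      simp only [shuffleWord_cons_cons, shuffleWord_nil_left, ih, Finsupp.mapDomain_add,
        Finsupp.mapDomain_single, appendLetter_add, appendLetter_single,
        appendLetter_mapDomain_cons, List.cons_append]
      abel
  | cons c u ihu =>
    induction v with
    | nil =>
      have ihu := ihu []
      simp only [List.nil_append, List.cons_append] at ihu ⊢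
      simp only [shuffleWord_cons_cons, shuffleWord_nil_right, ihu, Finsupp.mapDomain_add,
        Finsupp.mapDomain_single, appendLetter_add, appendLetter_single,
        appendLetter_mapDomain_cons, List.cons_append]
      abel
    | cons e v ihv =>
      have ihu := ihu (e :: v)
      simp only [List.cons_append] at ihu ihv ⊢
      simp only [shuffleWord_cons_cons, ihu, ihv, Finsupp.mapDomain_add, appendLetter_add,
        appendLetter_mapDomain_cons]
      abel

theorem sigT_shuffleWord (hX : ∀ j, IntervalIntegrable (deriv fun u => X u j) volume 0 L)
    (u v : Word d) (ht : t ∈ uIcc 0 L) :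
    sigT X t (shuffleWord u v) = sigWord X t u * sigWord X t v := by
  induction u using List.reverseRecOn generalizing v t with
  | nil => rw [shuffleWord_nil_left, sigT_single, sigWord_nil]
  | append_singleton u a ihu =>
    induction v using List.reverseRecOn generalizing t with
    | nil => rw [shuffleWord_nil_right, sigT_single, sigWord_nil, one_mul, mul_one]
    | append_singleton v b ihv =>
      rw [shuffleWord_append_singleton, sigT_add, sigT_appendLetter hX _ _ ht,
        sigT_appendLetter hX _ _ ht, ← integral_add (intervalIntegrable_sigT_mul_deriv hX _ _ ht)
          (intervalIntegrable_sigT_mul_deriv hX _ _ ht),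
        sigWord_append_singleton, sigWord_append_singleton,
        IntervalIntegrable.integral_mul_integral (intervalIntegrable_sigWord_mul_deriv hX _ _ ht)
          (intervalIntegrable_sigWord_mul_deriv hX _ _ ht)]
      refine integral_congr fun r hr => ?_
      have hr : r ∈ uIcc 0 L := uIcc_subset_uIcc_left ht hr
      simp only [ihu _ hr, ihv hr, sigWord_append_singleton]
      ring

theorem sigT_shuffle (hX : ∀ j, IntervalIntegrable (deriv fun u => X u j) volume 0 L)
    (x y : Tens d) (ht : t ∈ uIcc 0 L) :
    sigT X t (shuffle x y) = sigT X t x * sigT X t y := by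
  rw [shuffle, sigT_eq_linearCombination, map_finsuppSum]
  simp_rw [map_finsuppSum, map_smul, ← sigT_eq_linearCombination, sigT_shuffleWord hX _ _ ht,
    smul_eq_mul]
  rw [sigT, sigT, Finsupp.sum_mul]
  refine Finsupp.sum_congr fun u _ => ?_
  rw [Finsupp.mul_sum]
  exact Finsupp.sum_congr fun v _ => by ring

theorem sigT_letterT (hX : ∀ j, AbsolutelyContinuousOnInterval (fun u => X u j) 0 L)
    (i : Fin d) (ht : t ∈ uIcc 0 L) : sigT X t (letterT i) = X t i - X 0 i := by
  rw [letterT, sigT_single, one_mul, ← List.nil_append [i], sigWord_append_singleton]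
  simp only [sigWord_nil, one_mul]
  exact ((hX i).mono (uIcc_subset_uIcc_left ht)).integral_deriv_eq_sub

theorem sigT_shufflePow (hX : ∀ j, IntervalIntegrable (deriv fun u => X u j) volume 0 L)
    (x : Tens d) (n : ℕ) (ht : t ∈ uIcc 0 L) :
    sigT X t (shufflePow x n) = sigT X t x ^ n := by
  induction n with
  | zero => rw [shufflePow, sigT_single, sigWord_nil, pow_zero, one_mul]
  | succ n ih => rw [shufflePow, sigT_shuffle hX _ _ ht, ih, pow_succ]

theorem sigT_shuffleList (hX : ∀ j, IntervalIntegrable (deriv fun u => X u j) volume 0 L)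
    (l : List (Tens d)) (ht : t ∈ uIcc 0 L) :
    sigT X t (shuffleList l) = (l.map (sigT X t)).prod := by
  induction l with
  | nil => rw [shuffleList, sigT_single, sigWord_nil, one_mul, List.map_nil, List.prod_nil]
  | cons y l ih => rw [shuffleList, sigT_shuffle hX _ _ ht, ih, List.map_cons, List.prod_cons]

theorem sigT_phiMon (hX : ∀ j, AbsolutelyContinuousOnInterval (fun u => X u j) 0 L)
    (τ : Fin d →₀ ℕ) (ht : t ∈ uIcc 0 L) :
    sigT X t (phiMon τ) = ∏ i, (X t i - X 0 i) ^ τ i := by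
  have hX' j := (hX j).intervalIntegrable_deriv
  simp only [phiMon, sigT_shuffleList hX' _ ht, List.map_map, Function.comp_def,
    sigT_shufflePow hX' _ _ ht, sigT_letterT hX _ ht, Fin.prod_univ_def]

theorem sigT_phi (hX : ∀ j, AbsolutelyContinuousOnInterval (fun u => X u j) 0 L)
    (f : MvPolynomial (Fin d) ℝ) (ht : t ∈ uIcc 0 L) :
    sigT X t (phi f) = MvPolynomial.eval (X t - X 0) f := by
  simp only [phi, sigT_sum, sigT_smul, sigT_phiMon hX _ ht, MvPolynomial.eval_eq', Pi.sub_apply]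

theorem eval_ptilde {m : ℕ} (p : PolyMap d m) (x₀ y : Fin d → ℝ) (i : Fin m) :
    MvPolynomial.eval y (ptilde p x₀ i) =
      MvPolynomial.eval (y + x₀) (p i) - MvPolynomial.eval x₀ (p i) := by
  rw [ptilde, map_sub, MvPolynomial.eval_C, MvPolynomial.aeval_eq_bind₁]
  congr 1
  exact (MvPolynomial.eval₂Hom_bind₁ _ _ _ _).trans (by simp [Pi.add_def])

theorem sigT_MpRev_ptilde_cons_eq_zero
    (hX : ∀ j, AbsolutelyContinuousOnInterval (fun u => X u j) 0 L) (hL : 0 ≤ L) {m : ℕ}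
    (p : PolyMap d m)
    (hzero : ∀ i, ∀ t ∈ Icc 0 L, MvPolynomial.eval (X t) (p i) = 0) (i : Fin m) (w : Word m) :
    sigT X L (MpRev (ptilde p (X 0)) (i :: w)) = 0 := by
  have hX' j := (hX j).intervalIntegrable_deriv
  rw [MpRev, sigT_sum, Finset.sum_congr rfl fun j _ => sigT_appendLetter hX' j _ right_mem_uIcc,
    ← integral_finsetSum fun j _ => intervalIntegrable_sigT_mul_deriv hX' _ j right_mem_uIcc]
  refine (intervalIntegral.integral_congr_ae ?_).trans intervalIntegral.integral_zero
  have hdiff : ∀ᵐ r, ∀ j, r ∈ uIcc 0 L → DifferentiableAt ℝ (fun u => X u j) r :=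
    ae_all_iff.2 fun j => (hX j).ae_differentiableAt
  filter_upwards [hdiff, (countable_singleton L).ae_notMem volume] with r hdiff hrL hrIoc
  rw [uIoc_of_le hL] at hrIoc
  have hrIoo : r ∈ Ioo 0 L := ⟨hrIoc.1, lt_of_le_of_ne hrIoc.2 hrL⟩
  have hr : r ∈ uIcc 0 L := uIcc_of_le hL ▸ Ioc_subset_Icc_self hrIoc
  have hvanish : ∀ᶠ u in nhds r, MvPolynomial.eval (X u - X 0) (ptilde p (X 0) i) = 0 := by
    filter_upwards [Ioo_mem_nhds hrIoo.1 hrIoo.2] with u hu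
    rw [eval_ptilde, sub_add_cancel, hzero i u (Ioo_subset_Icc_self hu),
      hzero i 0 (left_mem_Icc.2 hL), sub_zero]
  have htangent := MvPolynomial.sum_eval_pderiv_mul_eq_zero (Y := fun u => X u - X 0)
    (fun j => (hdiff j hr).hasDerivAt.sub_const (X 0 j)) hvanish
  simp only [kP, sigT_shuffle hX' _ _ hr, sigT_phi hX _ hr, mul_assoc, ← Finset.mul_sum]
  rw [htangent, mul_zero]

/-- If the piecewise continuously differentiable path `X : [0,L] → ℝ^d`
lies in the zero set of the ideal `I_p = ⟨p₁,…,p_m⟩`, then with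
`p̃(y) = p(y + X(0)) − p(X(0))` one has `M_{p̃}^*(σ(X)) = e`: `⟨σ(X), M_{p̃}(w)⟩ = 0` for
every non-empty word `w` and `⟨σ(X), M_{p̃}(e)⟩ = 1`. -/
theorem signature_vanishing_on_variety (d m : ℕ) (L : ℝ)
    (X : ℝ → Fin d → ℝ) (hX : PiecewiseC1 X L) (p : PolyMap d m)
    (hzero : ∀ i : Fin m, ∀ t ∈ Set.Icc (0 : ℝ) L, MvPolynomial.eval (X t) (p i) = 0) :
    (∀ w : Word m, w ≠ [] → sigT X L (MpWord (ptilde p (X 0)) w) = 0) ∧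
    sigT X L (MpWord (ptilde p (X 0)) ([] : Word m)) = 1 := by
  refine ⟨fun w hw => ?_, by
    rw [MpWord, List.reverse_nil, MpRev, sigT_single, sigWord_nil, one_mul]⟩
  obtain ⟨u, i, rfl⟩ := (List.eq_nil_or_concat' w).resolve_left hw
  rw [MpWord, List.reverse_concat']
  exact sigT_MpRev_ptilde_cons_eq_zero hX.absolutelyContinuousOnInterval hX.nonneg p hzero i
    u.reverse

end SigPaper
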